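/- Let G be a graph on an even number n of vertices that is extremal and non-forbidden: at least n−1 vertices have degree ≥ n−2, the vertex u of minimum degree satisfies 3 ≤ deg(u) ≤ n−3, G is not such that all vertices have degree ≥ n−2. Suppose there exists an initial profile s₀ with exactly n/2 − 1 vertices having preference 1, s₀(u) = 0, exactly ⌊deg(u)/2⌋ + 1 neighbors of u have preference 1, and some neighbor x of u has preference 0 such that if deg(x) = n−2 then the unique non-neighbor of x also has preference 0. Then starting from s₀ there is a sequence of two updates (first u flips to 1, then x flips to 1) after which n/2 + 1 vertices have preference 1 and none of them is unhappy; hence G is mbM. -/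

import Mathlib

/-!
Every vertex other than `u` has degree at least `n - 2`, so it misses at most one other
vertex. More than half of the neighbours of `u` prefer 1, so `u` may flip. The `n/2` ones
are then all adjacent to `x` (its only possible non-neighbour prefers 0), while `x` agrees
with at most `n/2 - 1` neighbours, so `x` may flip too. In the resulting profile with
`n/2 + 1` ones, `u` keeps a majority of agreeing neighbours (those of `s₀` plus `x`), and any
other 1-vertex agrees with at least `n/2 - 1` neighbours against at most `n/2 - 1` zeros.
Flipping an unhappy 0-vertex never makes a 1-vertex unhappy, so the dynamics can be run
from there to a stable profile without creating new zeros.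
-/

open Finset

variable {V : Type*}

/-- Number of neighbors of `x` inside the set `A`. -/
def nbrCount [Fintype V] [DecidableEq V] (G : SimpleGraph V) [DecidableRel G.Adj]
    (x : V) (A : Finset V) : ℕ :=
  (A.filter (fun y => G.Adj x y)).card

/-- The width of the partition `(S, Sᶜ)`: the number of crossing edges. -/
def bwidth [Fintype V] [DecidableEq V] (G : SimpleGraph V) [DecidableRel G.Adj]
    (S : Finset V) : ℕ :=
  ∑ x ∈ S, nbrCount G x Sᶜ

/-- Deficiency of a vertex with respect to the partition `(S, Sᶜ)`. -/
def defic [Fintype V] [DecidableEq V] (G : SimpleGraph V) [DecidableRel G.Adj]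
    (S : Finset V) (x : V) : ℤ :=
  if x ∈ S then (nbrCount G x S : ℤ) - (nbrCount G x Sᶜ : ℤ)
  else (nbrCount G x Sᶜ : ℤ) - (nbrCount G x S : ℤ)

/-- `(S, Sᶜ)` is a minimum bisection: `|S| = ⌈n/2⌉` and the width is minimal among
all such partitions. -/
def IsMinBisection [Fintype V] [DecidableEq V] (G : SimpleGraph V) [DecidableRel G.Adj]
    (S : Finset V) : Prop :=
  S.card = (Fintype.card V + 1) / 2 ∧
  ∀ T : Finset V, T.card = S.card → bwidth G S ≤ bwidth G T

/-- A vertex is unhappy if a strict majority of its neighbors hold the opposite preference. -/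
def Unhappy [Fintype V] [DecidableEq V] (G : SimpleGraph V) [DecidableRel G.Adj]
    (s : V → Bool) (x : V) : Prop :=
  (univ.filter (fun y => G.Adj x y ∧ s y = s x)).card <
  (univ.filter (fun y => G.Adj x y ∧ s y ≠ s x)).card

/-- One update step of the majority dynamics: an unhappy vertex flips its preference. -/
def FlipStep [Fintype V] [DecidableEq V] (G : SimpleGraph V) [DecidableRel G.Adj]
    (s t : V → Bool) : Prop :=
  ∃ x, Unhappy G s x ∧ t = Function.update s x (!s x)

/-- Reachability by a (possibly empty) sequence of updates. -/
def ReachesProf [Fintype V] [DecidableEq V] (G : SimpleGraph V) [DecidableRel G.Adj]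
    (s t : V → Bool) : Prop :=
  Relation.ReflTransGen (FlipStep G) s t

/-- A profile is stable if no vertex is unhappy. -/
def StableProf [Fintype V] [DecidableEq V] (G : SimpleGraph V) [DecidableRel G.Adj]
    (s : V → Bool) : Prop :=
  ∀ x, ¬ Unhappy G s x

/-- Number of vertices with preference 1. -/
def onesCount [Fintype V] (s : V → Bool) : ℕ :=
  (univ.filter (fun x => s x = true)).card

/-- Number of vertices with preference 0. -/
def zerosCount [Fintype V] (s : V → Bool) : ℕ :=
  (univ.filter (fun x => s x = false)).card

/-- Minority becomes majority: there is an initial profile with a strict majority of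
0-preferences and a sequence of updates reaching a stable profile in which at most half
of the vertices prefer 0. -/
def MbM [Fintype V] [DecidableEq V] (G : SimpleGraph V) [DecidableRel G.Adj] : Prop :=
  ∃ s₀ : V → Bool, 2 * zerosCount s₀ > Fintype.card V ∧
    ∃ t, ReachesProf G s₀ t ∧ StableProf G t ∧ 2 * zerosCount t ≤ Fintype.card V

lemma card_filter_update_true [DecidableEq V] {s : V → Bool} {w : V} (hw : s w = false)
    {A : Finset V} (hwA : w ∈ A) :
    #(A.filter fun z => Function.update s w true z = true) = #(A.filter fun z => s z = true) + 1 := by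
  have h : A.filter (fun z => Function.update s w true z = true)
      = insert w (A.filter fun z => s z = true) := by
    ext z
    by_cases hz : z = w <;> simp [hz, hw, hwA]
  rw [h, card_insert_of_notMem (by simp [hw])]

section Profiles

variable [Fintype V]

lemma onesCount_add_zerosCount (s : V → Bool) : onesCount s + zerosCount s = Fintype.card V := by
  simpa [onesCount, zerosCount] using card_filter_add_card_filter_not (s := univ) (s · = true)

lemma onesCount_update_true [DecidableEq V] {s : V → Bool} {w : V} (hw : s w = false) :
    onesCount (Function.update s w true) = onesCount s + 1 :=
  card_filter_update_true hw (mem_univ w)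

end Profiles

section Neighbours

open SimpleGraph

variable [Fintype V] (G : SimpleGraph V) [DecidableRel G.Adj]

def agreeNbrs (s : V → Bool) (x : V) : Finset V :=
  univ.filter fun y => G.Adj x y ∧ s y = s x

def disagreeNbrs (s : V → Bool) (x : V) : Finset V :=
  univ.filter fun y => G.Adj x y ∧ s y ≠ s x

variable {G}

lemma agreeNbrs_eq_filter_neighborFinset (s : V → Bool) (x : V) :
    agreeNbrs G s x = (G.neighborFinset x).filter fun y => s y = s x := by
  ext y
  simp [agreeNbrs]

lemma disagreeNbrs_eq_filter_neighborFinset (s : V → Bool) (x : V) :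
    disagreeNbrs G s x = (G.neighborFinset x).filter fun y => s y = !s x := by
  ext y
  simp [disagreeNbrs, Bool.eq_not_iff]

lemma card_agreeNbrs_add_card_disagreeNbrs (s : V → Bool) (x : V) :
    #(agreeNbrs G s x) + #(disagreeNbrs G s x) = G.degree x := by
  rw [← card_neighborFinset_eq_degree, ← card_filter_add_card_filter_not (s := G.neighborFinset x)
    (fun y => s y = s x)]
  congr 2 <;> ext y <;> simp [agreeNbrs, disagreeNbrs]

lemma card_agreeNbrs_lt (s : V → Bool) (x : V) :
    #(agreeNbrs G s x) < #(univ.filter fun z => s z = s x) :=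
  card_lt_card <| ssubset_iff_of_subset (fun y hy => by simp_all [agreeNbrs]) |>.2
    ⟨x, by simp, by simp [agreeNbrs]⟩

lemma disagreeNbrs_subset (s : V → Bool) (x : V) :
    disagreeNbrs G s x ⊆ univ.filter fun z => s z ≠ s x :=
  fun y hy => by simp_all [disagreeNbrs]

lemma card_filter_eq_le_card_agreeNbrs [DecidableEq V] (s : V → Bool) (x : V) :
    #(univ.filter fun z => s z = s x) ≤ #(agreeNbrs G s x) + 1 + Gᶜ.degree x := by
  have hsub : (univ.filter fun z => s z = s x) ⊆ agreeNbrs G s x ∪ {x} ∪ Gᶜ.neighborFinset x := by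
    intro y hy
    by_cases hyx : y = x
    · simp [hyx]
    · by_cases hadj : G.Adj x y <;> simp_all [agreeNbrs, Ne.symm hyx]
  calc #(univ.filter fun z => s z = s x)
      ≤ #(agreeNbrs G s x ∪ {x} ∪ Gᶜ.neighborFinset x) := card_le_card hsub
    _ ≤ #(agreeNbrs G s x) + 1 + Gᶜ.degree x := by
      grw [card_union_le, card_union_le, card_singleton, card_neighborFinset_eq_degree]

end Neighbours

section Unhappy

open SimpleGraph

variable [Fintype V] [DecidableEq V] {G : SimpleGraph V} [DecidableRel G.Adj]

lemma unhappy_iff_card_lt {s : V → Bool} {x : V} :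
    Unhappy G s x ↔ #(agreeNbrs G s x) < #(disagreeNbrs G s x) := Iff.rfl

lemma unhappy_iff_degree_lt_two_mul {s : V → Bool} {x : V} :
    Unhappy G s x ↔ G.degree x < 2 * #(disagreeNbrs G s x) := by
  have := card_agreeNbrs_add_card_disagreeNbrs (G := G) s x
  rw [unhappy_iff_card_lt]
  omega

lemma not_unhappy_iff_degree_le_two_mul {s : V → Bool} {x : V} :
    ¬ Unhappy G s x ↔ G.degree x ≤ 2 * #(agreeNbrs G s x) := by
  have := card_agreeNbrs_add_card_disagreeNbrs (G := G) s x
  rw [unhappy_iff_card_lt]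
  omega

lemma unhappy_of_forall_adj {s : V → Bool} {x : V} (hx : s x = false)
    (hadj : ∀ z, s z = true → G.Adj x z) (hcard : zerosCount s ≤ onesCount s) :
    Unhappy G s x := by
  have hdis : disagreeNbrs G s x = univ.filter fun z => s z = true := by
    ext z
    simp only [disagreeNbrs, hx, ne_eq, Bool.not_eq_false, mem_filter, mem_univ, true_and,
      and_iff_right_iff_imp]
    exact hadj z
  have hagree := card_agreeNbrs_lt (G := G) s x
  rw [hx] at hagree
  rw [unhappy_iff_card_lt, hdis]
  exact hagree.trans_le hcard

lemma not_unhappy_of_card_sub_two_le_degree {s : V → Bool} {x : V} (hx : s x = true)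
    (hdeg : Fintype.card V - 2 ≤ G.degree x) (hcard : zerosCount s + 2 ≤ onesCount s) :
    ¬ Unhappy G s x := by
  have hcompl : Gᶜ.degree x ≤ 1 := by
    rw [degree_compl]
    omega
  have hagree := card_filter_eq_le_card_agreeNbrs (G := G) s x
  have hdis := card_le_card (disagreeNbrs_subset (G := G) s x)
  simp only [hx, ne_eq, Bool.not_eq_true] at hagree hdis
  change onesCount s ≤ _ at hagree
  change _ ≤ zerosCount s at hdis
  rw [unhappy_iff_card_lt]
  omega

lemma not_unhappy_update_self {s : V → Bool} {w : V} (h : Unhappy G s w) :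
    ¬ Unhappy G (Function.update s w (!s w)) w := by
  set t := Function.update s w (!s w) with ht
  have hflip : ∀ z, z ≠ w → (t z = t w ↔ s z ≠ s w) := fun z hz => by
    rw [ht, Function.update_of_ne hz, Function.update_self, Bool.eq_not_iff]
  have hagree : agreeNbrs G t w = disagreeNbrs G s w := by
    ext z
    simp only [agreeNbrs, disagreeNbrs, mem_filter, mem_univ, true_and]
    exact and_congr_right fun hadj => hflip z hadj.ne'
  have hdisagree : disagreeNbrs G t w = agreeNbrs G s w := by
    ext z
    simp only [agreeNbrs, disagreeNbrs, mem_filter, mem_univ, true_and]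
    exact and_congr_right fun hadj => (not_congr (hflip z hadj.ne')).trans not_not
  rw [unhappy_iff_card_lt] at h ⊢
  rw [hagree, hdisagree]
  exact h.le.not_gt

lemma Unhappy.of_agree_mono {s t : V → Bool} {x : V} (hx : t x = s x)
    (hagree : ∀ z, s z = s x → t z = t x) (h : Unhappy G t x) : Unhappy G s x := by
  rw [unhappy_iff_card_lt] at h ⊢
  calc #(agreeNbrs G s x) ≤ #(agreeNbrs G t x) :=
        card_le_card fun z hz => by simp_all [agreeNbrs]
    _ < #(disagreeNbrs G t x) := h
    _ ≤ #(disagreeNbrs G s x) :=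
        card_le_card fun z hz => by
          simp only [disagreeNbrs, mem_filter, mem_univ, true_and] at hz ⊢
          exact ⟨hz.1, fun h => hz.2 (hagree z h)⟩

end Unhappy

section Dynamics

variable [Fintype V] [DecidableEq V] {G : SimpleGraph V} [DecidableRel G.Adj]

lemma eq_false_of_unhappy {s : V → Bool} {w : V} (hones : ∀ y, s y = true → ¬ Unhappy G s y)
    (hw : Unhappy G s w) : s w = false := by
  by_contra h
  exact hones w (Bool.not_eq_false _ ▸ h) hw

lemma not_unhappy_update_of_unhappy {s : V → Bool} {w : V}
    (hones : ∀ y, s y = true → ¬ Unhappy G s y) (hw : Unhappy G s w) :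
    ∀ y, Function.update s w true y = true → ¬ Unhappy G (Function.update s w true) y := by
  have hw0 := eq_false_of_unhappy hones hw
  intro y hy
  by_cases hyw : y = w
  · subst hyw
    simpa [hw0] using not_unhappy_update_self hw
  · rw [Function.update_of_ne hyw] at hy
    refine fun h => hones y hy (h.of_agree_mono (Function.update_of_ne hyw ..) fun z hz => ?_)
    by_cases hzw : z = w <;> simp_all

lemma exists_reachesProf_stableProf {s : V → Bool} (hones : ∀ y, s y = true → ¬ Unhappy G s y) :
    ∃ t, ReachesProf G s t ∧ StableProf G t ∧ zerosCount t ≤ zerosCount s := by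
  by_cases hstable : StableProf G s
  · exact ⟨s, .refl, hstable, le_rfl⟩
  obtain ⟨w, hw⟩ : ∃ w, Unhappy G s w := by simpa [StableProf] using hstable
  have hw0 := eq_false_of_unhappy hones hw
  have hdec : zerosCount (Function.update s w true) < zerosCount s := by
    have := onesCount_update_true hw0
    have := onesCount_add_zerosCount s
    have := onesCount_add_zerosCount (Function.update s w true)
    omega
  obtain ⟨t, hreach, htstable, hzeros⟩ :=
    exists_reachesProf_stableProf (not_unhappy_update_of_unhappy hones hw)
  exact ⟨t, .head ⟨w, hw, by rw [hw0]; rfl⟩ hreach, htstable, by omega⟩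
termination_by zerosCount s

end Dynamics

lemma Finset.forall_ne_of_card_sub_one_le_card_filter {α : Type*} [Fintype α] [DecidableEq α]
    {p : α → Prop} [DecidablePred p] (h : Fintype.card α - 1 ≤ #(univ.filter p)) {u : α}
    (hu : ¬ p u) {v : α} (hv : v ≠ u) : p v := by
  by_contra hpv
  have hsub : univ.filter p ⊆ univ \ {u, v} := by
    intro y hy
    simp only [mem_filter, mem_univ, true_and] at hy
    simp only [mem_sdiff, mem_univ, mem_insert, mem_singleton, true_and]
    rintro (rfl | rfl) <;> contradiction
  have hpair := card_le_univ {u, v}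
  have := card_le_card hsub
  rw [card_univ_sdiff, card_pair hv.symm] at this
  rw [card_pair hv.symm] at hpair
  omega

lemma SimpleGraph.degree_eq_card_sub_two_of_not_adj [Fintype V] {G : SimpleGraph V}
    [DecidableRel G.Adj] {x z : V} (hdeg : Fintype.card V - 2 ≤ G.degree x) (hxz : x ≠ z)
    (hnadj : ¬ G.Adj x z) : G.degree x = Fintype.card V - 2 := by
  have := (G.degree_lt_card_sub_one x).2 fun h => hnadj (h hxz)
  omega

section TwoFlips

variable [Fintype V] [DecidableEq V] {G : SimpleGraph V} [DecidableRel G.Adj]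

lemma adj_of_update_eq_true {s : V → Bool} {u x : V} (hux : G.Adj u x) (hx : s x = false)
    (hdeg : Fintype.card V - 2 ≤ G.degree x)
    (hcomp : G.degree x = Fintype.card V - 2 → ∀ y : V, y ≠ x → ¬ G.Adj x y → s y = false)
    {z : V} (hz : Function.update s u true z = true) : G.Adj x z := by
  by_cases hzu : z = u
  · exact hzu ▸ hux.symm
  rw [Function.update_of_ne hzu] at hz
  have hzx : z ≠ x := fun h => by simp [h, hx] at hz
  by_contra hnadj
  have hdegx := G.degree_eq_card_sub_two_of_not_adj hdeg hzx.symm hnadj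
  simp [hcomp hdegx z hzx hnadj] at hz

lemma not_unhappy_update_update {s : V → Bool} {u x : V} (hux : G.Adj u x) (hx : s x = false)
    (hnbr : G.degree u / 2 + 1 ≤ #((G.neighborFinset u).filter fun y => s y = true)) :
    ¬ Unhappy G (Function.update (Function.update s u true) x true) u := by
  set t := Function.update (Function.update s u true) x true
  have hmono : ∀ z ∈ G.neighborFinset u, Function.update s x true z = true → t z = true := by
    intro z _ hz
    by_cases hzx : z = x <;> by_cases hzu : z = u <;> simp_all [t]
  have hcard := card_le_card (monotone_filter_right _ hmono)
  rw [card_filter_update_true hx (G.mem_neighborFinset _ _ |>.2 hux)] at hcard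
  have htu : t u = true := by simp [t, hux.ne]
  rw [not_unhappy_iff_degree_le_two_mul, agreeNbrs_eq_filter_neighborFinset, htu]
  omega

end TwoFlips

theorem stmt17_general [Fintype V] [DecidableEq V] (G : SimpleGraph V) [DecidableRel G.Adj]
    (heven : Even (Fintype.card V))
    (hext : Fintype.card V - 1 ≤
      (Finset.univ.filter (fun x : V => Fintype.card V - 2 ≤ G.degree x)).card)
    (u : V)
    (hhi : G.degree u ≤ Fintype.card V - 3)
    (s₀ : V → Bool)
    (hones : onesCount s₀ = Fintype.card V / 2 - 1)
    (hu0 : s₀ u = false)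
    (hnbr : ((G.neighborFinset u).filter (fun y => s₀ y = true)).card
      = G.degree u / 2 + 1)
    (x : V) (hux : G.Adj u x) (hx0 : s₀ x = false)
    (hcomp : G.degree x = Fintype.card V - 2 →
      ∀ y : V, y ≠ x → ¬ G.Adj x y → s₀ y = false) :
    Unhappy G s₀ u ∧
    Unhappy G (Function.update s₀ u true) x ∧
    onesCount (Function.update (Function.update s₀ u true) x true)
      = Fintype.card V / 2 + 1 ∧
    (∀ y : V, Function.update (Function.update s₀ u true) x true y = true →
      ¬ Unhappy G (Function.update (Function.update s₀ u true) x true) y) ∧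
    MbM G := by
  obtain ⟨k, hk⟩ := heven
  have hxu : x ≠ u := hux.ne.symm
  have hdegu : 0 < G.degree u := G.degree_pos_iff_exists_adj u |>.2 ⟨x, hux⟩
  have hlarge : ∀ v, v ≠ u → Fintype.card V - 2 ≤ G.degree v :=
    fun v hv => forall_ne_of_card_sub_one_le_card_filter hext (by omega) hv
  set s₁ := Function.update s₀ u true with hs₁
  set s₂ := Function.update s₁ x true
  have hs₁x : s₁ x = false := by rw [hs₁, Function.update_of_ne hxu, hx0]
  have hones₁ : onesCount s₁ = k := by rw [onesCount_update_true hu0, hones]; omega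
  have hones₂ : onesCount s₂ = k + 1 := by rw [onesCount_update_true hs₁x, hones₁]
  have hzeros₀ := onesCount_add_zerosCount s₀
  have hzeros₁ := onesCount_add_zerosCount s₁
  have hzeros₂ := onesCount_add_zerosCount s₂
  have hu : Unhappy G s₀ u := by
    rw [unhappy_iff_degree_lt_two_mul, disagreeNbrs_eq_filter_neighborFinset, hu0,
      Bool.not_false, hnbr]
    omega
  have hx : Unhappy G s₁ x :=
    unhappy_of_forall_adj hs₁x (fun _ => adj_of_update_eq_true hux hx0 (hlarge x hxu) hcomp)
      (by omega)
  have hhappy : ∀ y, s₂ y = true → ¬ Unhappy G s₂ y := by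
    intro y hy
    by_cases hyu : y = u
    · exact hyu ▸ not_unhappy_update_update hux hx0 hnbr.ge
    · exact not_unhappy_of_card_sub_two_le_degree hy (hlarge y hyu) (by omega)
  refine ⟨hu, hx, by omega, hhappy, ?_⟩
  obtain ⟨t, hreach, hstable, hzeros⟩ := exists_reachesProf_stableProf hhappy
  refine ⟨s₀, by omega, t, .head ⟨u, hu, ?_⟩ (.head ⟨x, hx, ?_⟩ hreach), hstable, by omega⟩
  · rw [hu0]; rfl
  · rw [hs₁x]; rfl

/-- extremal graphs: under the stated conditions on an even-order extremal
non-forbidden graph and a suitable initial profile with n/2 − 1 ones, the vertex u and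
then its neighbor x flip to 1, after which n/2 + 1 vertices have preference 1 and none of
them is unhappy; hence G is mbM. -/
theorem stmt17 [Fintype V] [DecidableEq V] (G : SimpleGraph V) [DecidableRel G.Adj]
    (heven : Even (Fintype.card V))
    (hext : Fintype.card V - 1 ≤
      (Finset.univ.filter (fun x : V => Fintype.card V - 2 ≤ G.degree x)).card)
    (u : V) (humin : ∀ x : V, G.degree u ≤ G.degree x)
    (hlo : 3 ≤ G.degree u) (hhi : G.degree u ≤ Fintype.card V - 3)
    (s₀ : V → Bool)
    (hones : onesCount s₀ = Fintype.card V / 2 - 1)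
    (hu0 : s₀ u = false)
    (hnbr : ((G.neighborFinset u).filter (fun y => s₀ y = true)).card
      = G.degree u / 2 + 1)
    (x : V) (hux : G.Adj u x) (hx0 : s₀ x = false)
    (hcomp : G.degree x = Fintype.card V - 2 →
      ∀ y : V, y ≠ x → ¬ G.Adj x y → s₀ y = false) :
    Unhappy G s₀ u ∧
    Unhappy G (Function.update s₀ u true) x ∧
    onesCount (Function.update (Function.update s₀ u true) x true)
      = Fintype.card V / 2 + 1 ∧
    (∀ y : V, Function.update (Function.update s₀ u true) x true y = true →
      ¬ Unhappy G (Function.update (Function.update s₀ u true) x true) y) ∧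
    MbM G :=
  stmt17_general G heven hext u hhi s₀ hones hu0 hnbr x hux hx0 hcomp
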